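/- Let n be a positive integer. For every δ > 0 there exists ρ > 0 such that whenever D is a C*-algebra and b₁, …, bₙ ∈ D satisfy 0 ≤ bⱼ ≤ 1 and ‖bⱼ b_k‖ < ρ for all j ≠ k, then there exist y₁, …, yₙ ∈ D with 0 ≤ yⱼ ≤ 1, yⱼ y_k = 0 for j ≠ k, and ‖yⱼ - bⱼ‖ < δ for all j. -/

import Mathlib

/-!
Induction on `n`. Perturb `b₀, …, bₙ₋₁` to exactly orthogonal `y₀, …, yₙ₋₁` and cut them down
to `zⱼ = (yⱼ - η)₊`. The element `c = Σⱼ min (yⱼ / η) 1` acts as a unit on every `zⱼ`, while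
`‖bₙ c‖ ≤ η⁻¹ Σⱼ ‖bₙ yⱼ‖` is small; so the compression `(1 - c) bₙ (1 - c)`, rescaled to norm at
most one, is a positive contraction close to `bₙ` and orthogonal to every `zⱼ`.
All orthogonality relations come from one fact: for self-adjoint `a`, `b` with `a b = 0`, also
`f(a) g(b) = 0`, because the `x` with `x b = 0 = x⋆ b` form a closed star subalgebra.
-/

namespace NonUnitalStarSubalgebra

variable {R A : Type*} [CommSemiring R] [StarRing R] [NonUnitalSemiring A] [StarRing A]
  [Module R A] [IsScalarTower R A A] [StarModule R A]

/-- The largest star subalgebra inside the left annihilator of `b`; being closed, it contains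
`cfcₙ f a` as soon as it contains `a`. -/
def starLeftAnnihilator (b : A) : NonUnitalStarSubalgebra R A where
  carrier := {x | x * b = 0 ∧ star x * b = 0}
  zero_mem' := by simp
  add_mem' := by
    rintro x y ⟨hx, hx'⟩ ⟨hy, hy'⟩
    simp [add_mul, hx, hx', hy, hy']
  mul_mem' := by
    rintro x y ⟨hx, hx'⟩ ⟨hy, hy'⟩
    simp [mul_assoc, hx', hy]
  smul_mem' := by
    rintro r x ⟨hx, hx'⟩
    simp [smul_mul_assoc, hx, hx']
  star_mem' := by
    rintro x ⟨hx, hx'⟩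
    simp [hx, hx']

theorem isClosed_starLeftAnnihilator [TopologicalSpace A] [ContinuousMul A] [ContinuousStar A]
    [T2Space A] (b : A) : IsClosed (starLeftAnnihilator (R := R) b : Set A) :=
  (isClosed_eq (continuous_mul_const b) continuous_const).inter
    (isClosed_eq ((continuous_mul_const b).comp continuous_star) continuous_const)

end NonUnitalStarSubalgebra

section FunctionalCalculus

variable {A : Type*} [NonUnitalCStarAlgebra A]

open NonUnitalStarSubalgebra NonUnitalStarAlgebra in
theorem IsSelfAdjoint.cfcₙ_mul_eq_zero {a b : A} (ha : IsSelfAdjoint a) (hab : a * b = 0)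
    (f : ℝ → ℝ) : cfcₙ f a * b = 0 :=
  (elemental.le_of_mem (isClosed_starLeftAnnihilator b) (⟨hab, by rwa [ha.star_eq]⟩ :
    a ∈ starLeftAnnihilator (R := ℝ) b) (cfcₙ_mem_elemental f a)).1

theorem IsSelfAdjoint.cfcₙ_mul_cfcₙ_eq_zero {a b : A} (ha : IsSelfAdjoint a)
    (hb : IsSelfAdjoint b) (hab : a * b = 0) (f g : ℝ → ℝ) : cfcₙ f a * cfcₙ g b = 0 := by
  have hfab : b * cfcₙ f a = 0 := by
    simpa [hb.star_eq, IsSelfAdjoint.cfcₙ.star_eq] using congrArg star (ha.cfcₙ_mul_eq_zero hab f)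
  simpa [IsSelfAdjoint.cfcₙ.star_eq] using congrArg star (hb.cfcₙ_mul_eq_zero hfab g)

variable [PartialOrder A] [StarOrderedRing A]

theorem norm_mul_cfcₙ_le {a : A} (b : A) {f : ℝ → ℝ} {K : ℝ} (ha : IsSelfAdjoint a)
    (hf : ContinuousOn f (quasispectrum ℝ a)) (hf0 : f 0 = 0) (hK : 0 ≤ K)
    (hfK : ∀ t ∈ quasispectrum ℝ a, |f t| ≤ K * |t|) :
    ‖b * cfcₙ f a‖ ≤ K * ‖b * a‖ := by
  have hsq : cfcₙ f a * cfcₙ f a ≤ (K ^ 2) • (a * a) := by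
    have hsq_a : (K ^ 2) • (a * a) = cfcₙ (fun t => K ^ 2 * (t * t)) a := by
      rw [cfcₙ_const_mul _ _ a, cfcₙ_mul (fun t => t) (fun t => t) a, cfcₙ_id' ℝ a]
    rw [← cfcₙ_mul f f a, hsq_a]
    refine cfcₙ_mono fun t ht => ?_
    have := hfK t ht
    nlinarith [abs_nonneg (f t), abs_mul_abs_self (f t), abs_mul_abs_self t]
  have hconj := star_right_conjugate_le_conjugate hsq b
  have hnorm := CStarAlgebra.norm_le_norm_of_nonneg_of_le
    (star_right_conjugate_nonneg (IsSelfAdjoint.cfcₙ.mul_self_nonneg) b) hconj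
  have hlhs : b * (cfcₙ f a * cfcₙ f a) * star b = (b * cfcₙ f a) * star (b * cfcₙ f a) := by
    simp [star_mul, IsSelfAdjoint.cfcₙ.star_eq, mul_assoc]
  have hrhs : b * (K ^ 2 • (a * a)) * star b = K ^ 2 • ((b * a) * star (b * a)) := by
    simp [star_mul, ha.star_eq, mul_assoc, mul_smul_comm, smul_mul_assoc]
  rw [hlhs, hrhs, norm_smul, CStarRing.norm_self_mul_star, CStarRing.norm_self_mul_star,
    Real.norm_of_nonneg (by positivity)] at hnorm
  exact abs_le_of_sq_le_sq' (by nlinarith) (by positivity) |>.2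

end FunctionalCalculus

section Compression

/-- `(1 - c) * b * (1 - c)`, written without a unit. -/
def conjOneSub {A : Type*} [NonUnitalRing A] (c b : A) : A := b - b * c - c * b + c * b * c

theorem conjOneSub_mul_eq_zero {A : Type*} [NonUnitalRing A] {c z : A} (b : A)
    (hcz : c * z = z) : conjOneSub c b * z = 0 := by
  simp only [conjOneSub, add_mul, sub_mul, mul_assoc, hcz, sub_self, zero_sub, neg_add_cancel]

theorem norm_conjOneSub_sub_le {A : Type*} [NonUnitalNormedRing A] [StarRing A]
    [NormedStarGroup A] {c b : A} (hc : IsSelfAdjoint c) (hb : IsSelfAdjoint b) :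
    ‖conjOneSub c b - b‖ ≤ (2 + ‖c‖) * ‖b * c‖ := by
  have hcb : ‖c * b‖ = ‖b * c‖ := by rw [← norm_star, star_mul, hc.star_eq, hb.star_eq]
  have h : conjOneSub c b - b = c * (b * c) - b * c - c * b := by
    simp only [conjOneSub, mul_assoc]; abel
  calc ‖conjOneSub c b - b‖ ≤ ‖c * (b * c)‖ + ‖b * c‖ + ‖c * b‖ := by
        rw [h]; exact (norm_sub_le _ _).trans (by gcongr; exact norm_sub_le _ _)
    _ ≤ ‖c‖ * ‖b * c‖ + ‖b * c‖ + ‖b * c‖ := by rw [hcb]; gcongr; exact norm_mul_le _ _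
    _ = (2 + ‖c‖) * ‖b * c‖ := by ring

theorem conjOneSub_nonneg {A : Type*} [NonUnitalCStarAlgebra A] [PartialOrder A]
    [StarOrderedRing A] {c b : A} (hc : IsSelfAdjoint c) (hb : 0 ≤ b) :
    0 ≤ conjOneSub c b := by
  set s := CFC.sqrt b
  have hs : IsSelfAdjoint s := (CFC.sqrt_nonneg b).isSelfAdjoint
  have h : conjOneSub c b = (s - c * s) * star (s - c * s) := by
    rw [star_sub, star_mul, hs.star_eq, hc.star_eq, conjOneSub, ← CFC.sqrt_mul_sqrt_self b]
    noncomm_ring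
  rw [h]
  exact mul_star_self_nonneg _

end Compression

section Norms

theorem norm_mul_le_norm_mul_add {A : Type*} [NonUnitalNormedRing A] (a b y : A) :
    ‖a * y‖ ≤ ‖a * b‖ + ‖a‖ * ‖y - b‖ := by
  calc ‖a * y‖ = ‖a * b + a * (y - b)‖ := by rw [← mul_add, add_sub_cancel]
    _ ≤ ‖a * b‖ + ‖a‖ * ‖y - b‖ := (norm_add_le _ _).trans (by gcongr; exact norm_mul_le _ _)

variable {E : Type*} [NormedAddCommGroup E] [NormedSpace ℝ E]

theorem norm_inv_max_one_smul_le (w : E) : ‖(max 1 ‖w‖)⁻¹ • w‖ ≤ 1 := by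
  rw [norm_smul, norm_inv, Real.norm_of_nonneg (by positivity), inv_mul_le_iff₀ (by positivity)]
  simp

theorem norm_inv_max_one_smul_sub_le {w b : E} (hb : ‖b‖ ≤ 1) :
    ‖(max 1 ‖w‖)⁻¹ • w - b‖ ≤ 2 * ‖w - b‖ := by
  have hscale : ‖(max 1 ‖w‖)⁻¹ • w - w‖ ≤ ‖w - b‖ := by
    rcases le_total ‖w‖ 1 with hw | hw
    · simp [max_eq_left hw]
    · have hw0 : 0 < ‖w‖ := one_pos.trans_le hw
      have hshrink : ‖w‖⁻¹ • w - w = (‖w‖⁻¹ - 1) • w := by rw [sub_smul, one_smul]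
      have hcoef : ‖w‖⁻¹ ≤ 1 := inv_le_one_of_one_le₀ hw
      rw [max_eq_right hw, hshrink, norm_smul, Real.norm_of_nonpos (by linarith),
        neg_sub, sub_mul, one_mul, inv_mul_cancel₀ hw0.ne']
      linarith [norm_sub_norm_le w b]
  calc ‖(max 1 ‖w‖)⁻¹ • w - b‖ ≤ ‖(max 1 ‖w‖)⁻¹ • w - w‖ + ‖w - b‖ :=
        norm_sub_le_norm_sub_add_norm_sub _ _ _
    _ ≤ 2 * ‖w - b‖ := by linarith

end Norms

section CutDown

variable {D : Type*} [NonUnitalCStarAlgebra D]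

/-- `(y - η)₊`, written without a unit. -/
noncomputable def cutDown (η : ℝ) (y : D) : D := cfcₙ (fun t : ℝ => max (t - η) 0) y

/-- `min (y / η) 1`, written without a unit. -/
noncomputable def ramp (η : ℝ) (y : D) : D := cfcₙ (fun t : ℝ => min (t / η) 1) y

theorem ramp_mul_cutDown {η : ℝ} (hη : 0 < η) (y : D) :
    ramp η y * cutDown η y = cutDown η y := by
  rw [ramp, cutDown, ← cfcₙ_mul _ _ y (by fun_prop) (by simp) (by fun_prop) (by simp [hη.le])]
  refine cfcₙ_congr fun t _ => ?_
  rcases le_total t η with ht | ht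
  · simp [max_eq_right (sub_nonpos.2 ht)]
  · simp [min_eq_right ((one_le_div hη).2 ht)]

theorem IsSelfAdjoint.ramp_mul_cutDown_eq_zero {η : ℝ} {y y' : D} (hy : IsSelfAdjoint y)
    (hy' : IsSelfAdjoint y') (hyy' : y * y' = 0) : ramp η y * cutDown η y' = 0 :=
  hy.cfcₙ_mul_cfcₙ_eq_zero hy' hyy' _ _

theorem IsSelfAdjoint.cutDown_mul_cutDown_eq_zero {η : ℝ} {y y' : D} (hy : IsSelfAdjoint y)
    (hy' : IsSelfAdjoint y') (hyy' : y * y' = 0) : cutDown η y * cutDown η y' = 0 :=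
  hy.cfcₙ_mul_cfcₙ_eq_zero hy' hyy' _ _

variable [PartialOrder D] [StarOrderedRing D]

theorem cutDown_nonneg (η : ℝ) (y : D) : 0 ≤ cutDown η y :=
  cfcₙ_nonneg fun _ _ => le_max_right _ _

theorem cutDown_le {η : ℝ} (hη : 0 ≤ η) {y : D} (hy : 0 ≤ y) : cutDown η y ≤ y := by
  conv_rhs => rw [← cfcₙ_id' ℝ y]
  refine cfcₙ_mono (fun t ht => max_le (by linarith) (quasispectrum_nonneg_of_nonneg y hy t ht))
    (by fun_prop) (by fun_prop) (by simp [hη])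

theorem norm_cutDown_sub_le {η : ℝ} (hη : 0 ≤ η) {y : D} (hy : 0 ≤ y) :
    ‖cutDown η y - y‖ ≤ η := by
  have h : cutDown η y - y = cfcₙ (fun t : ℝ => max (t - η) 0 - t) y := by
    rw [cfcₙ_sub _ _ y (by fun_prop) (by simp [hη]) (by fun_prop) rfl, cfcₙ_id' ℝ y, cutDown]
  rw [h]
  refine norm_cfcₙ_le fun t ht => ?_
  have ht0 := quasispectrum_nonneg_of_nonneg y hy t ht
  rw [Real.norm_eq_abs, abs_le]
  constructor <;> linarith [le_max_left (t - η) 0, max_le (by linarith : t - η ≤ t) ht0]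

theorem norm_ramp_le {η : ℝ} (hη : 0 ≤ η) {y : D} (hy : 0 ≤ y) : ‖ramp η y‖ ≤ 1 :=
  norm_cfcₙ_le fun t ht => by
    have ht0 := quasispectrum_nonneg_of_nonneg y hy t ht
    rw [Real.norm_eq_abs, abs_le]
    exact ⟨le_min (by linarith [div_nonneg ht0 hη]) (by norm_num), min_le_right _ _⟩

theorem norm_mul_ramp_le {η : ℝ} (hη : 0 < η) {y : D} (hy : 0 ≤ y) (b : D) :
    ‖b * ramp η y‖ ≤ η⁻¹ * ‖b * y‖ :=
  norm_mul_cfcₙ_le b hy.isSelfAdjoint (by fun_prop) (by simp) (by positivity) fun t ht => by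
    have ht0 := quasispectrum_nonneg_of_nonneg y hy t ht
    rw [abs_of_nonneg (le_min (div_nonneg ht0 hη.le) zero_le_one), abs_of_nonneg ht0,
      ← div_eq_inv_mul]
    exact min_le_left _ _

end CutDown

section Step

variable {D : Type*} [NonUnitalCStarAlgebra D] [PartialOrder D] [StarOrderedRing D]

theorem exists_nonneg_near_annihilating {c b : D} (hc : IsSelfAdjoint c) (hb0 : 0 ≤ b)
    (hb1 : ‖b‖ ≤ 1) :
    ∃ w : D, 0 ≤ w ∧ ‖w‖ ≤ 1 ∧ ‖w - b‖ ≤ 2 * ((2 + ‖c‖) * ‖b * c‖) ∧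
      ∀ z : D, IsSelfAdjoint z → c * z = z → w * z = 0 ∧ z * w = 0 := by
  set w := conjOneSub c b
  have hw0 : 0 ≤ (max 1 ‖w‖)⁻¹ • w := smul_nonneg (by positivity) (conjOneSub_nonneg hc hb0)
  refine ⟨_, hw0, norm_inv_max_one_smul_le w, ?_, fun z hz hcz => ?_⟩
  · exact (norm_inv_max_one_smul_sub_le hb1).trans
      (by gcongr; exact norm_conjOneSub_sub_le hc hb0.isSelfAdjoint)
  · have hwz : (max 1 ‖w‖)⁻¹ • w * z = 0 := by
      rw [smul_mul_assoc, conjOneSub_mul_eq_zero b hcz, smul_zero]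
    refine ⟨hwz, ?_⟩
    simpa [star_mul, hz.star_eq, hw0.isSelfAdjoint.star_eq] using congrArg star hwz

theorem Fin.snoc_mul_snoc_eq_zero {A : Type*} [Mul A] [Zero A] {n : ℕ} {z : Fin n → A} {w : A}
    (hzz : ∀ j k, j ≠ k → z j * z k = 0) (hwz : ∀ j, w * z j = 0 ∧ z j * w = 0) :
    ∀ j k, j ≠ k → Fin.snoc (α := fun _ => A) z w j * Fin.snoc (α := fun _ => A) z w k = 0 := by
  intro j k hjk
  induction j using Fin.lastCases <;> induction k using Fin.lastCases <;>
    simp_all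

theorem exists_unit_for_cutDown {n : ℕ} {η : ℝ} (hη : 0 < η) {y : Fin n → D}
    (hy0 : ∀ j, 0 ≤ y j) (hyy : ∀ j k, j ≠ k → y j * y k = 0) :
    ∃ c : D, IsSelfAdjoint c ∧ ‖c‖ ≤ n ∧ (∀ j, c * cutDown η (y j) = cutDown η (y j)) ∧
      ∀ b : D, ‖b * c‖ ≤ η⁻¹ * ∑ j, ‖b * y j‖ := by
  have hysa : ∀ j, IsSelfAdjoint (y j) := fun j => (hy0 j).isSelfAdjoint
  refine ⟨∑ k, ramp η (y k), isSelfAdjoint_sum _ fun _ _ => IsSelfAdjoint.cfcₙ,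
    (norm_sum_le _ _).trans ?_, fun j => ?_, fun b => ?_⟩
  · simpa using Finset.sum_le_sum (s := Finset.univ) fun k _ => norm_ramp_le hη.le (hy0 k)
  · rw [Finset.sum_mul, Finset.sum_eq_single j
      (fun k _ hkj => (hysa k).ramp_mul_cutDown_eq_zero (hysa j) (hyy k j hkj)) (by simp),
      ramp_mul_cutDown hη]
  · rw [Finset.mul_sum, Finset.mul_sum]
    exact (norm_sum_le _ _).trans (Finset.sum_le_sum fun k _ => norm_mul_ramp_le hη (hy0 k) b)

theorem exists_orthogonal_snoc {n : ℕ} {η : ℝ} (hη : 0 < η) {y : Fin n → D}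
    (hy0 : ∀ j, 0 ≤ y j) (hy1 : ∀ j, ‖y j‖ ≤ 1) (hyy : ∀ j k, j ≠ k → y j * y k = 0)
    {b : D} (hb0 : 0 ≤ b) (hb1 : ‖b‖ ≤ 1) :
    ∃ z : Fin (n + 1) → D, (∀ j, 0 ≤ z j) ∧ (∀ j, ‖z j‖ ≤ 1) ∧
      (∀ j k, j ≠ k → z j * z k = 0) ∧ (∀ j : Fin n, ‖z j.castSucc - y j‖ ≤ η) ∧
      ‖z (Fin.last n) - b‖ ≤ 2 * (n + 2) * η⁻¹ * ∑ j, ‖b * y j‖ := by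
  obtain ⟨c, hc, hcnorm, hcz, hbc⟩ := exists_unit_for_cutDown hη hy0 hyy
  obtain ⟨w, hw0, hw1, hwb, hwz⟩ := exists_nonneg_near_annihilating hc hb0 hb1
  refine ⟨Fin.snoc (fun j => cutDown η (y j)) w, Fin.forall_fin_succ'.2 ⟨?_, ?_⟩,
    Fin.forall_fin_succ'.2 ⟨?_, ?_⟩, Fin.snoc_mul_snoc_eq_zero ?_ ?_, ?_, ?_⟩
  · exact fun j => by simpa using cutDown_nonneg η (y j)
  · simpa using hw0
  · exact fun j => by simpa using
      ((CStarAlgebra.norm_le_norm_of_nonneg_of_le (cutDown_nonneg η (y j))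
        (cutDown_le hη.le (hy0 j))).trans (hy1 j))
  · simpa using hw1
  · exact fun j k hjk =>
      (hy0 j).isSelfAdjoint.cutDown_mul_cutDown_eq_zero (hy0 k).isSelfAdjoint (hyy j k hjk)
  · exact fun j => hwz _ (cutDown_nonneg η (y j)).isSelfAdjoint (hcz j)
  · exact fun j => by simpa using norm_cutDown_sub_le hη.le (hy0 j)
  · simp only [Fin.snoc_last]
    calc ‖w - b‖ ≤ 2 * ((2 + ‖c‖) * ‖b * c‖) := hwb
      _ ≤ 2 * ((2 + n) * (η⁻¹ * ∑ j, ‖b * y j‖)) := by gcongr; exact hbc b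
      _ = 2 * (n + 2) * η⁻¹ * ∑ j, ‖b * y j‖ := by ring

theorem exists_orthogonal_near_of_init_near {n : ℕ} {δ ε : ℝ} (hδ : 0 < δ) (hεδ : ε ≤ δ / 2)
    (hε : ε ≤ δ ^ 2 / (8 * (n + 1) * (n + 2))) {b : Fin (n + 1) → D} (hb0 : ∀ j, 0 ≤ b j)
    (hb1 : ∀ j, ‖b j‖ ≤ 1) (hbb : ∀ j : Fin n, ‖b (Fin.last n) * b j.castSucc‖ ≤ ε)
    {y : Fin n → D} (hy0 : ∀ j, 0 ≤ y j) (hy1 : ∀ j, ‖y j‖ ≤ 1)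
    (hyy : ∀ j k, j ≠ k → y j * y k = 0) (hyb : ∀ j, ‖y j - b j.castSucc‖ < ε) :
    ∃ z : Fin (n + 1) → D, (∀ j, 0 ≤ z j) ∧ (∀ j, ‖z j‖ ≤ 1) ∧
      (∀ j k, j ≠ k → z j * z k = 0) ∧ (∀ j, ‖z j - b j‖ < δ) := by
  obtain ⟨z, hz0, hz1, hzz, hzy, hzb⟩ :=
    exists_orthogonal_snoc (half_pos hδ) hy0 hy1 hyy (hb0 (Fin.last n)) (hb1 _)
  have hby : ∀ j, ‖b (Fin.last n) * y j‖ ≤ 2 * ε := fun j =>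
    calc _ ≤ ‖b (Fin.last n) * b j.castSucc‖ + ‖b (Fin.last n)‖ * ‖y j - b j.castSucc‖ :=
          norm_mul_le_norm_mul_add _ _ _
      _ ≤ ε + 1 * ε := by gcongr; exacts [hbb j, hb1 _, (hyb j).le]
      _ = 2 * ε := by ring
  refine ⟨z, hz0, hz1, hzz, Fin.forall_fin_succ'.2 ⟨fun j => ?_, ?_⟩⟩
  · calc ‖z j.castSucc - b j.castSucc‖ ≤ ‖z j.castSucc - y j‖ + ‖y j - b j.castSucc‖ :=
          norm_sub_le_norm_sub_add_norm_sub _ _ _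
      _ < δ / 2 + δ / 2 := add_lt_add_of_le_of_lt (hzy j) ((hyb j).trans_le hεδ)
      _ = δ := add_halves δ
  · calc _ ≤ 2 * (n + 2) * (δ / 2)⁻¹ * ∑ j, ‖b (Fin.last n) * y j‖ := hzb
      _ ≤ 2 * (n + 2) * (δ / 2)⁻¹ * (n * (2 * (δ ^ 2 / (8 * (n + 1) * (n + 2))))) := by
        gcongr
        simpa using Finset.sum_le_sum (s := Finset.univ) fun j _ =>
          (hby j).trans (mul_le_mul_of_nonneg_left hε zero_le_two)
      _ = n / (n + 1) * δ := by field_simp; ring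
      _ < δ := mul_lt_of_lt_one_left hδ ((div_lt_one (by positivity)).2 (by linarith))

end Step

theorem almost_orthogonal_stability.{u} (n : ℕ) (hn : 0 < n) (δ : ℝ) (hδ : 0 < δ) :
    ∃ ρ : ℝ, 0 < ρ ∧
      ∀ (D : Type u) [NonUnitalCStarAlgebra D] [PartialOrder D] [StarOrderedRing D],
        ∀ b : Fin n → D, (∀ j, 0 ≤ b j) → (∀ j, ‖b j‖ ≤ 1) →
          (∀ j k, j ≠ k → ‖b j * b k‖ < ρ) →
          ∃ y : Fin n → D, (∀ j, 0 ≤ y j) ∧ (∀ j, ‖y j‖ ≤ 1) ∧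
            (∀ j k, j ≠ k → y j * y k = 0) ∧ (∀ j, ‖y j - b j‖ < δ) := by
  clear hn
  induction n generalizing δ with
  | zero => exact ⟨1, one_pos, fun D _ _ _ b _ _ _ =>
      ⟨b, finZeroElim, finZeroElim, fun j => j.elim0, finZeroElim⟩⟩
  | succ n ih =>
    set ε := min (δ / 2) (δ ^ 2 / (8 * (n + 1) * (n + 2)))
    have hε : 0 < ε := by positivity
    obtain ⟨ρ, hρ, hstab⟩ := ih ε hε
    refine ⟨min ρ ε, lt_min hρ hε, fun D _ _ _ b hb0 hb1 hbb => ?_⟩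
    obtain ⟨y, hy0, hy1, hyy, hyb⟩ := hstab D (Fin.init b) (fun j => hb0 _) (fun j => hb1 _)
      fun j k hjk => (hbb _ _ ((Fin.castSucc_injective n).ne hjk)).trans_le (min_le_left _ _)
    exact exists_orthogonal_near_of_init_near hδ (min_le_left _ _) (min_le_right _ _) hb0 hb1
      (fun j => ((hbb _ _ (Fin.castSucc_ne_last j).symm).trans_le (min_le_right _ _)).le)
      hy0 hy1 hyy hyb
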